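/- Let Y and Y' be points on the horizontal take-off line, T a point above it, and O a finite set of closed axis-aligned rectangular obstacles. Let P*(Y) be a collision-free increasing convex polygonal chain (CICP) from Y to T of minimum length, and let P(Y') be any CICP from Y' to T. Then P*(Y) does not cross P(Y'); that is, there is no point C common to both chains such that immediately to the right of C the chain P*(Y) goes strictly below P(Y') (equivalently, the segment of P*(Y) leaving C has strictly smaller slope than that of P(Y')). -/

import Mathlib

/-!
Both chains are graphs of convex nondecreasing functions `F` (for `P*(Y)`) and `G` (for
`P(Y')`). A crossing at `C` means `F < G` just right of `C`; let `C'` be the next point where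
they meet (at the latest `T`). Replacing `F` by `G` over `(C, C')` keeps the function convex and
nondecreasing, and its graph is a CICP from `Y` to `T` whose points all lie on one of the two
chains, hence collision-free. It is strictly shorter than `P*(Y)`: on a common grid, projecting
each edge of `P*(Y)` onto the direction of the corresponding new edge (Cauchy–Schwarz, strict
somewhere) bounds the length difference below by `∑ sᵢ (φᵢ₊₁ - φᵢ)`, where `φ ≤ 0` is the
difference of the two height functions, vanishing at both ends, and `sᵢ`, the sine of the slope
angle of the new chain, is nondecreasing; by Abel summation this sum is nonnegative. This
contradicts the minimality of `P*(Y)`.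
-/

open Set

/-- Euclidean distance between two points of `ℝ × ℝ`. -/
noncomputable def eudist (p q : ℝ × ℝ) : ℝ :=
  Real.sqrt ((q.1 - p.1) ^ 2 + (q.2 - p.2) ^ 2)

/-- A polygonal chain in the plane, given by vertices `v 0, v 1, …, v k`. -/
structure PolyChain where
  k : ℕ
  v : ℕ → ℝ × ℝ

namespace PolyChain

/-- The set of points of the chain (union of its edges). -/
def pts (P : PolyChain) : Set (ℝ × ℝ) :=
  ⋃ i ∈ Finset.range P.k, segment ℝ (P.v i) (P.v (i + 1))

/-- Total (Euclidean) length of the chain. -/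
noncomputable def length (P : PolyChain) : ℝ :=
  ∑ i ∈ Finset.range P.k, eudist (P.v i) (P.v (i + 1))

/-- Each vertex lies strictly to the right and weakly above its predecessor. -/
def Increasing (P : PolyChain) : Prop :=
  ∀ i < P.k, (P.v i).1 < (P.v (i + 1)).1 ∧ (P.v i).2 ≤ (P.v (i + 1)).2

/-- Each interior vertex lies on or to the right of the directed line from its
predecessor to its successor: the cross product
`(v (i+2) - v i) × (v (i+1) - v i)` is nonpositive. -/
def ConvexChain (P : PolyChain) : Prop :=
  ∀ i, i + 2 ≤ P.k →
    ((P.v (i + 2)).1 - (P.v i).1) * ((P.v (i + 1)).2 - (P.v i).2)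
      - ((P.v (i + 2)).2 - (P.v i).2) * ((P.v (i + 1)).1 - (P.v i).1) ≤ 0

end PolyChain

/-- A closed axis-aligned rectangle given by its lower-left / upper-right corners. -/
def rect (o : (ℝ × ℝ) × (ℝ × ℝ)) : Set (ℝ × ℝ) := Set.Icc o.1 o.2

/-- The chain avoids the open interior of every obstacle rectangle. -/
def CollisionFree (P : PolyChain) (O : Finset ((ℝ × ℝ) × (ℝ × ℝ))) : Prop :=
  ∀ o ∈ O, Disjoint P.pts (interior (rect o))

/-- A collision-free increasing convex polygonal chain from `Y` to `T`. -/
def CICP (Y T : ℝ × ℝ) (O : Finset ((ℝ × ℝ) × (ℝ × ℝ))) (P : PolyChain) : Prop :=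
  P.Increasing ∧ P.ConvexChain ∧ P.v 0 = Y ∧ P.v P.k = T ∧ CollisionFree P O

/-- Chain `P₁` crosses `P₂` (both ending at `T`) if they have a common point
`C ≠ T` immediately to the right of which `P₁` goes strictly below `P₂`. -/
def Crosses (P₁ P₂ : PolyChain) (T : ℝ × ℝ) : Prop :=
  ∃ C ∈ P₁.pts ∩ P₂.pts, C ≠ T ∧ ∃ ε > 0,
    ∀ p ∈ P₁.pts, ∀ q ∈ P₂.pts,
      p.1 = q.1 → C.1 < p.1 → p.1 < C.1 + ε → p.2 < q.2

lemma StrictMonoOn.notMem_Ioo_succ {α : Type*} [LinearOrder α] {ξ : ℕ → α} {n i : ℕ}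
    (hξ : StrictMonoOn ξ (Iic n)) (hi : i < n) {t : α} (ht : t ∈ ξ '' Iic n) :
    t ∉ Ioo (ξ i) (ξ (i + 1)) := by
  obtain ⟨l, hl, rfl⟩ := ht
  rintro ⟨h₁, h₂⟩
  have : i < l := (hξ.lt_iff_lt (show i ∈ Iic n from by simp; omega) hl).1 h₁
  have : l < i + 1 := (hξ.lt_iff_lt hl (show i + 1 ∈ Iic n from by simp; omega)).1 h₂
  omega

lemma Finset.exists_strictMonoOn_image_eq {α : Type*} [LinearOrder α] (X : Finset α)
    (hX : X.Nonempty) :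
    ∃ (n : ℕ) (ξ : ℕ → α), StrictMonoOn ξ (Set.Iic n) ∧ ξ '' Set.Iic n = X := by
  set e := X.orderEmbOfFin rfl
  have hcard : 0 < X.card := hX.card_pos
  refine ⟨X.card - 1, fun i => if h : i < X.card then e ⟨i, h⟩ else e ⟨0, hcard⟩, ?_, ?_⟩
  · intro i hi j hj hij
    simp only [Set.mem_Iic] at hi hj
    simp only [dif_pos (show i < X.card by omega), dif_pos (show j < X.card by omega)]
    exact e.strictMono (Fin.mk_lt_mk.2 hij)
  · ext t
    constructor
    · rintro ⟨i, hi, rfl⟩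
      simp only [Set.mem_Iic] at hi
      simp only [dif_pos (show i < X.card by omega)]
      exact X.orderEmbOfFin_mem rfl _
    · intro ht
      obtain ⟨⟨i, hi⟩, rfl⟩ := (Set.ext_iff.1 (X.range_orderEmbOfFin rfl) t).2 ht
      exact ⟨i, by simp only [Set.mem_Iic]; omega, dif_pos hi⟩

lemma exists_first_eq_of_lt {f g : ℝ → ℝ} (hf : Continuous f) (hg : Continuous g) {a b ε : ℝ}
    (hab : a < b) (hb : f b = g b) (hε : 0 < ε) (hlt : ∀ t ∈ Ioo a (a + ε), t ≤ b → f t < g t) :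
    ∃ c ∈ Ioc a b, f c = g c ∧ ∀ t ∈ Ioo a c, f t < g t := by
  obtain ⟨δ, hδ, hδε, hδb⟩ : ∃ δ, 0 < δ ∧ δ < ε ∧ a + δ < b :=
    ⟨min ε (b - a) / 2, by positivity, by linarith [min_le_left ε (b - a)],
      by linarith [min_le_right ε (b - a)]⟩
  have hK : IsCompact (Icc (a + δ) b ∩ {t | f t = g t}) :=
    isCompact_Icc.inter_right (isClosed_eq hf hg)
  obtain ⟨c, ⟨⟨hc₁, hc₂⟩, hc⟩, hmin⟩ := hK.exists_isLeast ⟨b, ⟨hδb.le, le_rfl⟩, hb⟩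
  refine ⟨c, ⟨by linarith, hc₂⟩, hc, fun t ht => ?_⟩
  by_cases hta : t < a + ε
  · exact hlt t ⟨ht.1, hta⟩ (ht.2.le.trans hc₂)
  · by_contra! hgf
    -- otherwise `g - f` changes sign on `[a + δ, t]`, producing a meeting point before `c`
    obtain ⟨s, hs, hfs⟩ := intermediate_value_Icc' (by linarith : a + δ ≤ t)
      (hg.sub hf).continuousOn
      ⟨sub_nonpos.2 hgf, (sub_pos.2 (hlt (a + δ) ⟨by linarith, by linarith⟩ hδb.le)).le⟩
    have := hmin ⟨⟨hs.1, hs.2.trans (ht.2.le.trans hc₂)⟩, (sub_eq_zero.1 hfs).symm⟩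
    linarith [ht.2, hs.2]

-- `b / √(a ^ 2 + b ^ 2)` is the sine of the direction angle of the vector `(a, b)`.
lemma div_sqrt_sq_add_sq_le {a b c d : ℝ} (ha : 0 < a) (hc : 0 < c) (h : b / a ≤ d / c) :
    b / √(a ^ 2 + b ^ 2) ≤ d / √(c ^ 2 + d ^ 2) := by
  have hsin : ∀ {a b : ℝ}, 0 < a → b / √(a ^ 2 + b ^ 2) = Real.sin (Real.arctan (b / a)) := by
    intro a b ha
    rw [Real.sin_arctan, show a ^ 2 + b ^ 2 = a ^ 2 * (1 + (b / a) ^ 2) by field_simp,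
      Real.sqrt_mul (sq_nonneg a), Real.sqrt_sq ha.le, div_div]
  rw [hsin ha, hsin hc]
  exact Real.strictMonoOn_sin.monotoneOn (Ioo_subset_Icc_self (Real.arctan_mem_Ioo _))
    (Ioo_subset_Icc_self (Real.arctan_mem_Ioo _)) (Real.arctan_strictMono.monotone h)

-- Cauchy–Schwarz against the unit vector `(dx, v) / √(dx ^ 2 + v ^ 2)`.
lemma sqrt_add_div_mul_sub_lt {dx u v : ℝ} (hdx : 0 < dx) (huv : u ≠ v) :
    √(dx ^ 2 + v ^ 2) + v / √(dx ^ 2 + v ^ 2) * (u - v) < √(dx ^ 2 + u ^ 2) := by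
  have hL : 0 < √(dx ^ 2 + v ^ 2) := Real.sqrt_pos.2 (by positivity)
  have hL2 : √(dx ^ 2 + v ^ 2) ^ 2 = dx ^ 2 + v ^ 2 := Real.sq_sqrt (by positivity)
  have hcs : dx ^ 2 + u * v < √(dx ^ 2 + u ^ 2) * √(dx ^ 2 + v ^ 2) := by
    rw [← Real.sqrt_mul (by positivity)]
    have : 0 < dx ^ 2 * (u - v) ^ 2 := by have := sub_ne_zero.2 huv; positivity
    exact Real.lt_sqrt_of_sq_lt (by nlinarith)
  calc √(dx ^ 2 + v ^ 2) + v / √(dx ^ 2 + v ^ 2) * (u - v)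
      = (dx ^ 2 + u * v) / √(dx ^ 2 + v ^ 2) := by
        field_simp
        linear_combination hL2
    _ < √(dx ^ 2 + u ^ 2) := by rwa [div_lt_iff₀ hL]

lemma sum_mul_sub_nonneg {n : ℕ} {s φ : ℕ → ℝ} (hs : ∀ i, i + 1 < n → s i ≤ s (i + 1))
    (hφ : ∀ i ≤ n, φ i ≤ 0) (h₀ : φ 0 = 0) (hn : φ n = 0) :
    0 ≤ ∑ i ∈ Finset.range n, s i * (φ (i + 1) - φ i) := by
  simp only [← smul_eq_mul (a := s _)]
  rw [Finset.sum_range_by_parts]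
  simp only [Finset.sum_range_sub, smul_eq_mul, h₀, hn, sub_zero, mul_zero, zero_sub,
    neg_nonneg]
  refine Finset.sum_nonpos fun i hi => ?_
  have hi := Finset.mem_range.1 hi
  exact mul_nonpos_of_nonneg_of_nonpos (sub_nonneg.2 (hs i (by omega))) (hφ _ (by omega))

theorem sum_eudist_lt_of_le_of_slope_mono {n : ℕ} {x F H : ℕ → ℝ}
    (hx : ∀ i < n, x i < x (i + 1))
    (hH : ∀ i, i + 1 < n → (H (i + 1) - H i) / (x (i + 1) - x i) ≤
      (H (i + 2) - H (i + 1)) / (x (i + 2) - x (i + 1)))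
    (hFH : ∀ i ≤ n, F i ≤ H i) (h₀ : F 0 = H 0) (hn : F n = H n) (hlt : ∃ j ≤ n, F j < H j) :
    ∑ i ∈ Finset.range n, eudist (x i, H i) (x (i + 1), H (i + 1)) <
      ∑ i ∈ Finset.range n, eudist (x i, F i) (x (i + 1), F (i + 1)) := by
  set s : ℕ → ℝ := fun i =>
    (H (i + 1) - H i) / √((x (i + 1) - x i) ^ 2 + (H (i + 1) - H i) ^ 2)
  have hdx : ∀ i < n, 0 < x (i + 1) - x i := fun i hi => sub_pos.2 (hx i hi)
  have habel : 0 ≤ ∑ i ∈ Finset.range n, s i * ((F (i + 1) - H (i + 1)) - (F i - H i)) :=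
    sum_mul_sub_nonneg (φ := fun i => F i - H i)
      (fun i hi => div_sqrt_sq_add_sq_le (hdx i (by omega)) (hdx (i + 1) hi) (hH i hi))
      (fun i hi => sub_nonpos.2 (hFH i hi)) (sub_eq_zero.2 h₀) (sub_eq_zero.2 hn)
  have hedge : ∀ i < n, F (i + 1) - F i ≠ H (i + 1) - H i →
      eudist (x i, H i) (x (i + 1), H (i + 1)) + s i * ((F (i + 1) - H (i + 1)) - (F i - H i))
        < eudist (x i, F i) (x (i + 1), F (i + 1)) := fun i hi hne => by
    have := sqrt_add_div_mul_sub_lt (hdx i hi) hne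
    simp only [eudist, s]
    convert this using 3
    ring
  obtain ⟨i₀, hi₀, hne⟩ : ∃ i < n, F (i + 1) - F i ≠ H (i + 1) - H i := by
    obtain ⟨j, hj, hFHj⟩ := hlt
    by_contra! hall
    have : F j - F 0 = H j - H 0 := by
      rw [← Finset.sum_range_sub F, ← Finset.sum_range_sub H]
      exact Finset.sum_congr rfl fun i hi => hall i (by simp at hi; omega)
    linarith
  calc ∑ i ∈ Finset.range n, eudist (x i, H i) (x (i + 1), H (i + 1))
      ≤ ∑ i ∈ Finset.range n, (eudist (x i, H i) (x (i + 1), H (i + 1)) +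
          s i * ((F (i + 1) - H (i + 1)) - (F i - H i))) := by
        rw [Finset.sum_add_distrib]
        exact le_add_of_nonneg_right habel
    _ < ∑ i ∈ Finset.range n, eudist (x i, F i) (x (i + 1), F (i + 1)) := by
        refine Finset.sum_lt_sum (fun i hi => ?_) ⟨i₀, Finset.mem_range.2 hi₀, hedge i₀ hi₀ hne⟩
        by_cases hne : F (i + 1) - F i = H (i + 1) - H i
        · rw [show F (i + 1) - H (i + 1) - (F i - H i) = 0 by linarith, mul_zero, add_zero]
          simp only [eudist, hne, le_refl]
        · exact (hedge i (Finset.mem_range.1 hi) hne).le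

lemma slope_outer_le_right {x a y p q r : ℝ} (hxa : x < a) (hay : a < y)
    (h : (q - p) / (a - x) ≤ (r - q) / (y - a)) : (r - p) / (y - x) ≤ (r - q) / (y - a) := by
  rw [div_le_div_iff₀ (by linarith) (by linarith)] at h ⊢
  nlinarith

lemma slope_left_le_outer {x a y p q r : ℝ} (hxa : x < a) (hay : a < y)
    (h : (q - p) / (a - x) ≤ (r - q) / (y - a)) : (q - p) / (a - x) ≤ (r - p) / (y - x) := by
  rw [div_le_div_iff₀ (by linarith) (by linarith)] at h ⊢
  nlinarith

section Glue

variable {f g : ℝ → ℝ} {a b : ℝ}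

noncomputable def glue (f g : ℝ → ℝ) (a b t : ℝ) : ℝ := if t ∈ Ioo a b then g t else f t

lemma glue_of_notMem {t : ℝ} (ht : t ∉ Ioo a b) : glue f g a b t = f t := if_neg ht

lemma glue_of_mem_Icc (ha : f a = g a) (hb : f b = g b) {t : ℝ} (ht : t ∈ Icc a b) :
    glue f g a b t = g t := by
  by_cases h : t ∈ Ioo a b
  · exact if_pos h
  · rw [glue_of_notMem h]
    obtain rfl | rfl : t = a ∨ t = b := by
      by_contra! hne
      exact h ⟨ht.1.lt_of_ne hne.1.symm, ht.2.lt_of_ne hne.2⟩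
    exacts [ha, hb]

lemma le_glue (hfg : ∀ t ∈ Ioo a b, f t ≤ g t) (t : ℝ) : f t ≤ glue f g a b t := by
  unfold glue
  split_ifs with h
  exacts [hfg t h, le_rfl]

lemma monotone_glue (hf : Monotone f) (hg : Monotone g) (ha : f a = g a) (hb : f b = g b) :
    Monotone (glue f g a b) := by
  intro x y hxy
  by_cases hx : x ∈ Ioo a b <;> by_cases hy : y ∈ Ioo a b
  · simp only [glue, if_pos hx, if_pos hy]
    exact hg hxy
  · have hby : b ≤ y := not_lt.1 fun h => hy ⟨hx.1.trans_le hxy, h⟩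
    rw [glue_of_mem_Icc ha hb (Ioo_subset_Icc_self hx), glue_of_notMem hy]
    exact (hg hx.2.le).trans (hb ▸ hf hby)
  · have hxa : x ≤ a := not_lt.1 fun h => hx ⟨h, hxy.trans_lt hy.2⟩
    rw [glue_of_notMem hx, glue_of_mem_Icc ha hb (Ioo_subset_Icc_self hy)]
    exact (hf hxa).trans (ha ▸ hg hy.1.le)
  · rw [glue_of_notMem hx, glue_of_notMem hy]
    exact hf hxy

-- The slope can only increase at the junctions `a` and `b`.
lemma convexOn_glue (hf : ConvexOn ℝ univ f) (hg : ConvexOn ℝ univ g) (ha : f a = g a)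
    (hb : f b = g b) (hfg : ∀ t ∈ Ioo a b, f t ≤ g t) : ConvexOn ℝ univ (glue f g a b) := by
  have hfs {x y z : ℝ} (hxy : x < y) (hyz : y < z) :=
    hf.slope_mono_adjacent (mem_univ x) (mem_univ z) hxy hyz
  have hgs {x y z : ℝ} (hxy : x < y) (hyz : y < z) :=
    hg.slope_mono_adjacent (mem_univ x) (mem_univ z) hxy hyz
  refine convexOn_of_slope_mono_adjacent convex_univ fun {x y z} _ _ hxy hyz => ?_
  by_cases hy : y ∈ Ioo a b
  -- compare with the slopes of `g` over `[max x a, y]` and `[y, min z b]`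
  · have hgy : glue f g a b y = g y := if_pos hy
    have hleft : (glue f g a b y - glue f g a b x) / (y - x) ≤
        (g y - g (max x a)) / (y - max x a) := by
      rcases le_or_gt a x with hax | hxa
      · rw [max_eq_left hax, hgy, glue_of_mem_Icc ha hb ⟨hax, (hxy.trans hy.2).le⟩]
      · rw [max_eq_right hxa.le, hgy, glue_of_notMem fun h => h.1.not_gt hxa]
        refine slope_outer_le_right hxa hy.1 (ha ▸ (hfs hxa hy.1).trans ?_)
        exact div_le_div_of_nonneg_right (by linarith [hfg y hy]) (by linarith [hy.1])
    have hright : (g (min z b) - g y) / (min z b - y) ≤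
        (glue f g a b z - glue f g a b y) / (z - y) := by
      rcases le_or_gt z b with hzb | hbz
      · rw [min_eq_left hzb, hgy, glue_of_mem_Icc ha hb ⟨(hy.1.trans hyz).le, hzb⟩]
      · rw [min_eq_right hbz.le, hgy, glue_of_notMem fun h => h.2.not_gt hbz]
        refine slope_left_le_outer hy.2 hbz (hb ▸ le_trans ?_ (hfs hy.2 hbz))
        exact div_le_div_of_nonneg_right (by linarith [hfg y hy]) (by linarith [hy.2])
    exact hleft.trans ((hgs (max_lt hxy hy.1) (lt_min hyz hy.2)).trans hright)
  · have hfh := le_glue hfg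
    rw [glue_of_notMem hy]
    calc (f y - glue f g a b x) / (y - x) ≤ (f y - f x) / (y - x) :=
          div_le_div_of_nonneg_right (by linarith [hfh x]) (by linarith)
      _ ≤ (f z - f y) / (z - y) := hfs hxy hyz
      _ ≤ (glue f g a b z - f y) / (z - y) :=
          div_le_div_of_nonneg_right (by linarith [hfh z]) (by linarith)

end Glue

namespace PolyChain

variable {Q : PolyChain}

noncomputable def slope (Q : PolyChain) (i : ℕ) : ℝ :=
  ((Q.v (i + 1)).2 - (Q.v i).2) / ((Q.v (i + 1)).1 - (Q.v i).1)

noncomputable def edgeLine (Q : PolyChain) (i : ℕ) (x : ℝ) : ℝ :=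
  (Q.v i).2 + Q.slope i * (x - (Q.v i).1)

/-- For an increasing convex chain the graph of this function over `[(v 0).1, (v k).1]` is the
chain (`mem_pts_iff`); it is `0` for the empty chain `k = 0`. -/
noncomputable def envelope (Q : PolyChain) (x : ℝ) : ℝ :=
  if h : (Finset.range Q.k).Nonempty then (Finset.range Q.k).sup' h (Q.edgeLine · x) else 0

lemma Increasing.fst_lt_fst (hI : Q.Increasing) {i j : ℕ} (hij : i < j) (hj : j ≤ Q.k) :
    (Q.v i).1 < (Q.v j).1 :=
  (strictMonoOn_Iic_of_lt_succ (ψ := fun i => (Q.v i).1) (n := Q.k)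
    fun m hm => by simpa using (hI m hm).1) (hij.le.trans hj) hj hij

lemma Increasing.fst_le_fst (hI : Q.Increasing) {i j : ℕ} (hij : i ≤ j) (hj : j ≤ Q.k) :
    (Q.v i).1 ≤ (Q.v j).1 := by
  rcases hij.eq_or_lt with rfl | hij
  · rfl
  · exact (hI.fst_lt_fst hij hj).le

lemma Increasing.slope_nonneg (hI : Q.Increasing) {i : ℕ} (hi : i < Q.k) : 0 ≤ Q.slope i :=
  div_nonneg (sub_nonneg.2 (hI i hi).2) (sub_nonneg.2 (hI i hi).1.le)

lemma ConvexChain.slope_le_slope_succ (hI : Q.Increasing) (hC : Q.ConvexChain) {i : ℕ}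
    (hi : i + 2 ≤ Q.k) : Q.slope i ≤ Q.slope (i + 1) := by
  have h₁ := (hI i (by omega)).1
  have h₂ := (hI (i + 1) (by omega)).1
  have hc := hC i hi
  unfold slope
  rw [div_le_div_iff₀ (by linarith) (by linarith)]
  nlinarith

lemma edgeLine_eq_of_right (hI : Q.Increasing) {i : ℕ} (hi : i < Q.k) (x : ℝ) :
    Q.edgeLine i x = (Q.v (i + 1)).2 + Q.slope i * (x - (Q.v (i + 1)).1) := by
  have : (Q.v (i + 1)).1 - (Q.v i).1 ≠ 0 := (sub_pos.2 (hI i hi).1).ne'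
  unfold edgeLine slope
  field_simp
  ring

lemma edgeLine_le_edgeLine_succ (hI : Q.Increasing) (hC : Q.ConvexChain) {i : ℕ}
    (hi : i + 2 ≤ Q.k) {x : ℝ} (hx : (Q.v (i + 1)).1 ≤ x) :
    Q.edgeLine i x ≤ Q.edgeLine (i + 1) x := by
  rw [edgeLine_eq_of_right hI (by omega)]
  have := hC.slope_le_slope_succ hI hi
  unfold edgeLine
  nlinarith

lemma edgeLine_succ_le_edgeLine (hI : Q.Increasing) (hC : Q.ConvexChain) {i : ℕ}
    (hi : i + 2 ≤ Q.k) {x : ℝ} (hx : x ≤ (Q.v (i + 1)).1) :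
    Q.edgeLine (i + 1) x ≤ Q.edgeLine i x := by
  rw [edgeLine_eq_of_right hI (i := i) (by omega)]
  have := hC.slope_le_slope_succ hI hi
  unfold edgeLine
  nlinarith

lemma edgeLine_le_of_le (hI : Q.Increasing) (hC : Q.ConvexChain) {i j : ℕ} (hij : i ≤ j)
    (hj : j < Q.k) {x : ℝ} (hx : (Q.v j).1 ≤ x) : Q.edgeLine i x ≤ Q.edgeLine j x := by
  induction j, hij using Nat.le_induction with
  | base => rfl
  | succ j hij ih =>
    exact (ih (by omega) ((hI.fst_le_fst (by omega) (by omega)).trans hx)).trans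
      (edgeLine_le_edgeLine_succ hI hC (by omega) hx)

lemma edgeLine_le_of_ge (hI : Q.Increasing) (hC : Q.ConvexChain) {i j : ℕ} (hji : j ≤ i)
    (hi : i < Q.k) {x : ℝ} (hx : x ≤ (Q.v (j + 1)).1) : Q.edgeLine i x ≤ Q.edgeLine j x := by
  induction i, hji using Nat.le_induction with
  | base => rfl
  | succ i hji ih =>
    exact (edgeLine_succ_le_edgeLine hI hC (by omega)
      (hx.trans (hI.fst_le_fst (by omega) (by omega)))).trans (ih (by omega))

lemma envelope_eq_edgeLine (hI : Q.Increasing) (hC : Q.ConvexChain) {j : ℕ} (hj : j < Q.k)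
    {x : ℝ} (hx₁ : (Q.v j).1 ≤ x) (hx₂ : x ≤ (Q.v (j + 1)).1) :
    Q.envelope x = Q.edgeLine j x := by
  have hne : (Finset.range Q.k).Nonempty := ⟨j, Finset.mem_range.2 hj⟩
  rw [envelope, dif_pos hne]
  refine le_antisymm (Finset.sup'_le _ _ fun i hi => ?_)
    (Finset.le_sup' (Q.edgeLine · x) (Finset.mem_range.2 hj))
  rcases le_total i j with hij | hji
  · exact edgeLine_le_of_le hI hC hij hj hx₁
  · exact edgeLine_le_of_ge hI hC hji (Finset.mem_range.1 hi) hx₂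

lemma envelope_vertex (hI : Q.Increasing) (hC : Q.ConvexChain) (hk : 0 < Q.k) {j : ℕ}
    (hj : j ≤ Q.k) : Q.envelope (Q.v j).1 = (Q.v j).2 := by
  rcases hj.lt_or_eq with hj | rfl
  · rw [envelope_eq_edgeLine hI hC hj le_rfl (hI j hj).1.le]
    simp [edgeLine]
  · obtain ⟨j, hj⟩ : ∃ j, Q.k = j + 1 := ⟨Q.k - 1, by omega⟩
    rw [hj, envelope_eq_edgeLine hI hC (j := j) (by omega) (hI j (by omega)).1.le le_rfl,
      edgeLine_eq_of_right hI (by omega)]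
    ring

lemma monotone_envelope (hI : Q.Increasing) : Monotone Q.envelope := by
  intro x y hxy
  unfold envelope
  split_ifs with hne
  · refine Finset.sup'_le _ _ fun i hi => (Finset.le_sup' _ hi).trans' ?_
    have := hI.slope_nonneg (Finset.mem_range.1 hi)
    simp only [edgeLine]
    nlinarith
  · rfl

lemma envelope_eq_sup' (hk : 0 < Q.k) :
    Q.envelope = fun x => (Finset.range Q.k).sup' ⟨0, Finset.mem_range.2 hk⟩ (Q.edgeLine · x) :=
  funext fun _ => dif_pos _

lemma continuous_envelope (hk : 0 < Q.k) : Continuous Q.envelope := by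
  rw [envelope_eq_sup' hk]
  exact Continuous.finset_sup'_apply _ fun i _ => by unfold edgeLine; fun_prop

lemma convexOn_finset_sup' {ι : Type*} {s : Finset ι} (hs : s.Nonempty) {f : ι → ℝ → ℝ}
    (hf : ∀ i ∈ s, ConvexOn ℝ univ (f i)) : ConvexOn ℝ univ fun x => s.sup' hs (f · x) := by
  induction hs using Finset.Nonempty.cons_induction with
  | singleton a => simpa using hf a (by simp)
  | cons a t ha ht ih =>
    simp only [Finset.sup'_cons ht]
    exact (hf a (by simp)).sup (ih fun i hi => hf i (by simp [hi]))

lemma convexOn_envelope (hk : 0 < Q.k) : ConvexOn ℝ univ Q.envelope := by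
  rw [envelope_eq_sup' hk]
  refine convexOn_finset_sup' _ fun i _ => ⟨convex_univ, fun x _ y _ a b _ _ hab => le_of_eq ?_⟩
  simp only [edgeLine, smul_eq_mul]
  linear_combination (Q.slope i * (Q.v i).1 - (Q.v i).2) * hab

lemma exists_edge {x : ℝ} (h₀ : (Q.v 0).1 ≤ x) (hk : x < (Q.v Q.k).1) :
    ∃ j < Q.k, (Q.v j).1 ≤ x ∧ x < (Q.v (j + 1)).1 := by
  by_contra! hno
  have : ∀ j ≤ Q.k, (Q.v j).1 ≤ x := by
    intro j hj
    induction j with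
    | zero => exact h₀
    | succ j ih => exact hno j (by omega) (ih (by omega))
  exact (this Q.k le_rfl).not_gt hk

lemma exists_edge_of_forall_notMem_Ioo {u w : ℝ} (huw : u < w) (hu : (Q.v 0).1 ≤ u)
    (hw : w ≤ (Q.v Q.k).1) (hno : ∀ j ≤ Q.k, (Q.v j).1 ∉ Ioo u w) :
    ∃ j < Q.k, (Q.v j).1 ≤ u ∧ w ≤ (Q.v (j + 1)).1 := by
  obtain ⟨j, hj, hju, hju'⟩ := exists_edge hu (huw.trans_le hw)
  exact ⟨j, hj, hju, not_lt.1 fun hwj => hno (j + 1) hj ⟨hju', hwj⟩⟩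

lemma mk_edgeLine_mem_segment (hI : Q.Increasing) {j : ℕ} (hj : j < Q.k) {x : ℝ}
    (hx₁ : (Q.v j).1 ≤ x) (hx₂ : x ≤ (Q.v (j + 1)).1) :
    (x, Q.edgeLine j x) ∈ segment ℝ (Q.v j) (Q.v (j + 1)) := by
  have hd : 0 < (Q.v (j + 1)).1 - (Q.v j).1 := sub_pos.2 (hI j hj).1
  rw [segment_eq_image']
  refine ⟨(x - (Q.v j).1) / ((Q.v (j + 1)).1 - (Q.v j).1),
    ⟨div_nonneg (by linarith) hd.le, div_le_one_of_le₀ (by linarith) hd.le⟩, ?_⟩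
  ext <;> simp only [Prod.fst_add, Prod.snd_add, Prod.smul_fst, Prod.smul_snd, Prod.fst_sub,
    Prod.snd_sub, smul_eq_mul, edgeLine, slope] <;> field_simp; ring

lemma mk_envelope_mem_segment (hI : Q.Increasing) (hC : Q.ConvexChain) {j : ℕ} (hj : j < Q.k)
    {x : ℝ} (hx₁ : (Q.v j).1 ≤ x) (hx₂ : x ≤ (Q.v (j + 1)).1) :
    (x, Q.envelope x) ∈ segment ℝ (Q.v j) (Q.v (j + 1)) := by
  rw [envelope_eq_edgeLine hI hC hj hx₁ hx₂]
  exact mk_edgeLine_mem_segment hI hj hx₁ hx₂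

lemma mem_pts_iff (hI : Q.Increasing) (hC : Q.ConvexChain) (hk : 0 < Q.k) {z : ℝ × ℝ} :
    z ∈ Q.pts ↔ z.1 ∈ Icc (Q.v 0).1 (Q.v Q.k).1 ∧ z.2 = Q.envelope z.1 := by
  constructor
  · intro hz
    obtain ⟨j, hj, hseg⟩ := mem_iUnion₂.1 hz
    have hj := Finset.mem_range.1 hj
    have hd : 0 < (Q.v (j + 1)).1 - (Q.v j).1 := sub_pos.2 (hI j hj).1
    rw [segment_eq_image'] at hseg
    obtain ⟨θ, ⟨hθ₀, hθ₁⟩, rfl⟩ := hseg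
    simp only [Prod.fst_add, Prod.snd_add, Prod.smul_fst, Prod.smul_snd, Prod.fst_sub,
      Prod.snd_sub, smul_eq_mul]
    have hx₁ : (Q.v j).1 ≤ (Q.v j).1 + θ * ((Q.v (j + 1)).1 - (Q.v j).1) := by nlinarith
    have hx₂ : (Q.v j).1 + θ * ((Q.v (j + 1)).1 - (Q.v j).1) ≤ (Q.v (j + 1)).1 := by nlinarith
    refine ⟨⟨(hI.fst_le_fst (Nat.zero_le j) hj.le).trans hx₁,
      hx₂.trans (hI.fst_le_fst hj le_rfl)⟩, ?_⟩
    rw [envelope_eq_edgeLine hI hC hj hx₁ hx₂, edgeLine, slope]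
    field_simp
    ring
  · rintro ⟨⟨hx₀, hxk⟩, hz⟩
    obtain ⟨j, hj, hx₁, hx₂⟩ : ∃ j < Q.k, (Q.v j).1 ≤ z.1 ∧ z.1 ≤ (Q.v (j + 1)).1 := by
      rcases hxk.lt_or_eq with hxk | hxk
      · obtain ⟨j, hj, hx₁, hx₂⟩ := exists_edge hx₀ hxk
        exact ⟨j, hj, hx₁, hx₂.le⟩
      · refine ⟨Q.k - 1, by omega, ?_, ?_⟩
        · exact hxk ▸ hI.fst_le_fst (by omega) le_rfl
        · rw [Nat.sub_add_cancel hk, hxk]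
    rw [← Prod.mk.eta (p := z), hz]
    exact mem_iUnion₂.2 ⟨j, Finset.mem_range.2 hj, mk_envelope_mem_segment hI hC hj hx₁ hx₂⟩

lemma segment_subset_pts (hI : Q.Increasing) (hC : Q.ConvexChain) {u w : ℝ} (huw : u < w)
    (hu : (Q.v 0).1 ≤ u) (hw : w ≤ (Q.v Q.k).1) (hno : ∀ j ≤ Q.k, (Q.v j).1 ∉ Ioo u w) :
    segment ℝ (u, Q.envelope u) (w, Q.envelope w) ⊆ Q.pts := by
  obtain ⟨j, hj, hju, hwj⟩ := exists_edge_of_forall_notMem_Ioo huw hu hw hno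
  refine ((convex_segment _ _).segment_subset ?_ ?_).trans
    (subset_biUnion_of_mem (u := fun i => segment ℝ (Q.v i) (Q.v (i + 1)))
      (Finset.mem_coe.2 (Finset.mem_range.2 hj)))
  · exact mk_envelope_mem_segment hI hC hj hju (huw.le.trans hwj)
  · exact mk_envelope_mem_segment hI hC hj (hju.trans huw.le) hwj

/-- The arc length of the chain over `[(v 0).1, t]`. -/
noncomputable def arcLength (Q : PolyChain) (t : ℝ) : ℝ :=
  ∑ j ∈ Finset.range Q.k,
    √(1 + Q.slope j ^ 2) * (max (Q.v j).1 (min t (Q.v (j + 1)).1) - (Q.v j).1)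

lemma arcLength_sub_arcLength (hI : Q.Increasing) {j : ℕ} (hj : j < Q.k) {u w : ℝ}
    (hu : (Q.v j).1 ≤ u) (huw : u ≤ w) (hw : w ≤ (Q.v (j + 1)).1) :
    Q.arcLength w - Q.arcLength u = √(1 + Q.slope j ^ 2) * (w - u) := by
  unfold arcLength
  rw [← Finset.sum_sub_distrib, Finset.sum_eq_single j]
  · rw [min_eq_left hw, min_eq_left (huw.trans hw), max_eq_right (hu.trans huw),
      max_eq_right hu]
    ring
  · intro i hi hij
    have hik := Finset.mem_range.1 hi
    rcases hij.lt_or_gt with hij | hij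
    · have := hI.fst_le_fst (show i + 1 ≤ j by omega) hj.le
      rw [min_eq_right (by linarith), min_eq_right (by linarith)]
      ring
    · have := hI.fst_le_fst (show j + 1 ≤ i by omega) hik.le
      rw [max_eq_left (min_le_of_left_le (by linarith)),
        max_eq_left (min_le_of_left_le (by linarith))]
      ring
  · exact fun h => absurd (Finset.mem_range.2 hj) h

lemma eudist_envelope (hI : Q.Increasing) (hC : Q.ConvexChain) {j : ℕ} (hj : j < Q.k)
    {u w : ℝ} (hu : (Q.v j).1 ≤ u) (huw : u ≤ w) (hw : w ≤ (Q.v (j + 1)).1) :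
    eudist (u, Q.envelope u) (w, Q.envelope w) = Q.arcLength w - Q.arcLength u := by
  have hrise : Q.envelope w - Q.envelope u = Q.slope j * (w - u) := by
    rw [envelope_eq_edgeLine hI hC hj hu (huw.trans hw),
      envelope_eq_edgeLine hI hC hj (hu.trans huw) hw, edgeLine, edgeLine]
    ring
  rw [arcLength_sub_arcLength hI hj hu huw hw, eudist, hrise,
    show (w - u) ^ 2 + (Q.slope j * (w - u)) ^ 2 = (w - u) ^ 2 * (1 + Q.slope j ^ 2) by ring,
    Real.sqrt_mul (sq_nonneg _), Real.sqrt_sq (sub_nonneg.2 huw), mul_comm]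

lemma sum_eudist_envelope (hI : Q.Increasing) (hC : Q.ConvexChain) {n : ℕ} {ξ : ℕ → ℝ}
    (hξ : ∀ i < n, ∃ j < Q.k, (Q.v j).1 ≤ ξ i ∧ ξ i ≤ ξ (i + 1) ∧ ξ (i + 1) ≤ (Q.v (j + 1)).1) :
    ∑ i ∈ Finset.range n, eudist (ξ i, Q.envelope (ξ i)) (ξ (i + 1), Q.envelope (ξ (i + 1))) =
      Q.arcLength (ξ n) - Q.arcLength (ξ 0) := by
  rw [← Finset.sum_range_sub (fun i => Q.arcLength (ξ i))]
  refine Finset.sum_congr rfl fun i hi => ?_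
  obtain ⟨j, hj, hu, huw, hw⟩ := hξ i (Finset.mem_range.1 hi)
  exact eudist_envelope hI hC hj hu huw hw

lemma length_eq_sum_eudist_envelope (hI : Q.Increasing) (hC : Q.ConvexChain) (hk : 0 < Q.k)
    {n : ℕ} {ξ : ℕ → ℝ} (hξ : StrictMonoOn ξ (Iic n)) (h₀ : ξ 0 = (Q.v 0).1)
    (hn : ξ n = (Q.v Q.k).1) (hV : ∀ j ≤ Q.k, (Q.v j).1 ∈ ξ '' Iic n) :
    Q.length = ∑ i ∈ Finset.range n,
      eudist (ξ i, Q.envelope (ξ i)) (ξ (i + 1), Q.envelope (ξ (i + 1))) := by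
  have hvertex : ∀ j ≤ Q.k, Q.v j = ((Q.v j).1, Q.envelope (Q.v j).1) := fun j hj => by
    rw [envelope_vertex hI hC hk hj]
  have hlen : Q.length = Q.arcLength (Q.v Q.k).1 - Q.arcLength (Q.v 0).1 := by
    rw [← sum_eudist_envelope hI hC fun i hi => ⟨i, hi, le_rfl, (hI i hi).1.le, le_rfl⟩,
      length]
    exact Finset.sum_congr rfl fun i hi => by
      rw [← hvertex i (by simp at hi; omega), ← hvertex (i + 1) (by simp at hi; omega)]
  rw [hlen, sum_eudist_envelope hI hC, h₀, hn]
  intro i hi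
  have hmono := hξ.monotoneOn
  have hlt : ξ i < ξ (i + 1) := hξ (by simp; omega) (by simp; omega) (by omega)
  obtain ⟨j, hj, hu, hw⟩ := exists_edge_of_forall_notMem_Ioo hlt
    (h₀ ▸ hmono (by simp) (by simp; omega) (Nat.zero_le i))
    (hn ▸ hmono (by simp; omega) (by simp) hi)
    fun j hj => hξ.notMem_Ioo_succ hi (hV j hj)
  exact ⟨j, hj, hu, hlt.le, hw⟩

def ofGraph (f : ℝ → ℝ) (ξ : ℕ → ℝ) (n : ℕ) : PolyChain := ⟨n, fun i => (ξ i, f (ξ i))⟩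

variable {f : ℝ → ℝ} {ξ : ℕ → ℝ} {n : ℕ}

lemma increasing_ofGraph (hξ : StrictMonoOn ξ (Iic n)) (hf : Monotone f) :
    (ofGraph f ξ n).Increasing := fun i hi => by
  have h : ξ i < ξ (i + 1) := hξ (by simp [ofGraph] at hi ⊢; omega)
    (by simp [ofGraph] at hi ⊢; omega) (Nat.lt_succ_self i)
  exact ⟨h, hf h.le⟩

lemma convexChain_ofGraph (hξ : StrictMonoOn ξ (Iic n)) (hf : ConvexOn ℝ univ f) :
    (ofGraph f ξ n).ConvexChain := fun i hi => by
  change i + 2 ≤ n at hi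
  have h₁ : ξ i < ξ (i + 1) := hξ (by simp; omega) (by simp; omega) (by omega)
  have h₂ : ξ (i + 1) < ξ (i + 2) := hξ (by simp; omega) (by simp; omega) (by omega)
  have := hf.slope_mono_adjacent (mem_univ _) (mem_univ _) h₁ h₂
  rw [div_le_div_iff₀ (by linarith) (by linarith)] at this
  simp only [ofGraph]
  nlinarith

variable {R : PolyChain} {c c' : ℝ}

lemma pts_ofGraph_glue_subset (hI : Q.Increasing) (hC : Q.ConvexChain) (hIR : R.Increasing)
    (hCR : R.ConvexChain) (hFc : Q.envelope c = R.envelope c)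
    (hFc' : Q.envelope c' = R.envelope c') (hRc : (R.v 0).1 ≤ c) (hRc' : c' ≤ (R.v R.k).1)
    (hξ : StrictMonoOn ξ (Iic n)) (hξQ : ξ '' Iic n ⊆ Icc (Q.v 0).1 (Q.v Q.k).1)
    (hcξ : c ∈ ξ '' Iic n) (hc'ξ : c' ∈ ξ '' Iic n) (hQξ : ∀ j ≤ Q.k, (Q.v j).1 ∈ ξ '' Iic n)
    (hRξ : ∀ j ≤ R.k, (R.v j).1 ∈ Icc c c' → (R.v j).1 ∈ ξ '' Iic n) :
    (ofGraph (glue Q.envelope R.envelope c c') ξ n).pts ⊆ Q.pts ∪ R.pts := by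
  intro z hz
  obtain ⟨i, hi, hseg⟩ := mem_iUnion₂.1 hz
  replace hi : i < n := Finset.mem_range.1 hi
  have hu : ξ i ∈ ξ '' Iic n := mem_image_of_mem ξ (by simp; omega)
  have hw : ξ (i + 1) ∈ ξ '' Iic n := mem_image_of_mem ξ (by simp; omega)
  have huw : ξ i < ξ (i + 1) := hξ (by simp; omega) (by simp; omega) (by omega)
  have hno : ∀ t ∈ ξ '' Iic n, t ∉ Ioo (ξ i) (ξ (i + 1)) := fun t ht => hξ.notMem_Ioo_succ hi ht
  simp only [ofGraph] at hseg
  obtain hout | hmid : (ξ (i + 1) ≤ c ∨ c' ≤ ξ i) ∨ (c ≤ ξ i ∧ ξ (i + 1) ≤ c') := by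
    have h₁ := hno c hcξ
    have h₂ := hno c' hc'ξ
    simp only [mem_Ioo, not_and_or, not_lt] at h₁ h₂
    tauto
  swap
  · right
    rw [glue_of_mem_Icc hFc hFc' ⟨hmid.1, huw.le.trans hmid.2⟩,
      glue_of_mem_Icc hFc hFc' ⟨hmid.1.trans huw.le, hmid.2⟩] at hseg
    refine segment_subset_pts hIR hCR huw (hRc.trans hmid.1) (hmid.2.trans hRc')
      (fun j hj hjuw => hno _ (hRξ j hj ⟨?_, ?_⟩) hjuw) hseg
    · linarith [hjuw.1, hmid.1]
    · linarith [hjuw.2, hmid.2]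
  · left
    rw [glue_of_notMem fun h => by rcases hout with h' | h' <;> linarith [h.1, h.2],
      glue_of_notMem fun h => by rcases hout with h' | h' <;> linarith [h.1, h.2]] at hseg
    exact segment_subset_pts hI hC huw (hξQ hu).1 (hξQ hw).2
      (fun j hj => hno _ (hQξ j hj)) hseg

lemma exists_grid (hI : Q.Increasing) (S : Finset ℝ)
    (hS : ∀ t ∈ S, t ∈ Icc (Q.v 0).1 (Q.v Q.k).1) :
    ∃ (n : ℕ) (ξ : ℕ → ℝ), StrictMonoOn ξ (Iic n) ∧ ξ 0 = (Q.v 0).1 ∧ ξ n = (Q.v Q.k).1 ∧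
      ξ '' Iic n ⊆ Icc (Q.v 0).1 (Q.v Q.k).1 ∧ (∀ j ≤ Q.k, (Q.v j).1 ∈ ξ '' Iic n) ∧
      ∀ t ∈ S, t ∈ ξ '' Iic n := by
  classical
  set X := (Finset.range (Q.k + 1)).image (fun j => (Q.v j).1) ∪ S
  obtain ⟨n, ξ, hξ, hX⟩ := X.exists_strictMonoOn_image_eq
    ⟨(Q.v 0).1, Finset.mem_union_left _ (Finset.mem_image_of_mem _ (by simp))⟩
  have hξQ : ξ '' Iic n ⊆ Icc (Q.v 0).1 (Q.v Q.k).1 := by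
    rw [hX]
    intro t ht
    rcases Finset.mem_union.1 ht with ht | ht
    · obtain ⟨j, hj, rfl⟩ := Finset.mem_image.1 ht
      have hj := Finset.mem_range.1 hj
      exact ⟨hI.fst_le_fst (Nat.zero_le _) (by omega), hI.fst_le_fst (by omega) le_rfl⟩
    · exact hS t ht
  have hQξ : ∀ j ≤ Q.k, (Q.v j).1 ∈ ξ '' Iic n := fun j hj => hX ▸ Finset.mem_union_left _
    (Finset.mem_image_of_mem _ (Finset.mem_range.2 (by omega)))
  refine ⟨n, ξ, hξ, ?_, ?_, hξQ, hQξ, fun t ht => hX ▸ Finset.mem_union_right _ ht⟩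
  · obtain ⟨l, hl, hl'⟩ := hQξ 0 (Nat.zero_le _)
    exact le_antisymm (hl' ▸ hξ.monotoneOn (by simp) hl (Nat.zero_le l))
      (hξQ (mem_image_of_mem _ (by simp))).1
  · obtain ⟨l, hl, hl'⟩ := hQξ Q.k le_rfl
    exact le_antisymm (hξQ (mem_image_of_mem _ (by simp))).2
      (hl' ▸ hξ.monotoneOn hl (by simp) hl)

theorem exists_shortcut (hI : Q.Increasing) (hC : Q.ConvexChain) (hk : 0 < Q.k)
    (hIR : R.Increasing) (hCR : R.ConvexChain) (hkR : 0 < R.k) (hcc' : c < c')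
    (hc : (Q.v 0).1 ≤ c) (hc' : c' ≤ (Q.v Q.k).1) (hRc : (R.v 0).1 ≤ c)
    (hRc' : c' ≤ (R.v R.k).1) (hFc : Q.envelope c = R.envelope c)
    (hFc' : Q.envelope c' = R.envelope c') (hlt : ∀ t ∈ Ioo c c', Q.envelope t < R.envelope t) :
    ∃ P : PolyChain, P.Increasing ∧ P.ConvexChain ∧ P.v 0 = Q.v 0 ∧ P.v P.k = Q.v Q.k ∧
      P.pts ⊆ Q.pts ∪ R.pts ∧ P.length < Q.length := by
  classical
  set S : Finset ℝ := ((Finset.range (R.k + 1)).image (fun j => (R.v j).1)).filter (· ∈ Icc c c') ∪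
    {c, c', (c + c') / 2}
  obtain ⟨n, ξ, hξ, h₀, hn, hξQ, hQξ, hSξ⟩ := exists_grid hI S <| by
    intro t ht
    simp only [S, Finset.mem_union, Finset.mem_filter, Finset.mem_insert,
      Finset.mem_singleton] at ht
    rcases ht with ⟨-, hjc⟩ | rfl | rfl | rfl
    · exact ⟨hc.trans hjc.1, hjc.2.trans hc'⟩
    · exact ⟨hc, hcc'.le.trans hc'⟩
    · exact ⟨hc.trans hcc'.le, hc'⟩
    · constructor <;> linarith
  -- the midpoint of `(c, c')` is a grid point where the new chain is strictly above `Q`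
  set h := glue Q.envelope R.envelope c c'
  have hh₀ : h (ξ 0) = Q.envelope (ξ 0) := glue_of_notMem fun hm => by linarith [hm.1]
  have hhn : h (ξ n) = Q.envelope (ξ n) := glue_of_notMem fun hm => by linarith [hm.2]
  have hconv : ConvexOn ℝ univ h := convexOn_glue (convexOn_envelope hk) (convexOn_envelope hkR)
    hFc hFc' fun t ht => (hlt t ht).le
  have hstep : ∀ i < n, ξ i < ξ (i + 1) := fun i hi => hξ (by simp; omega) (by simp; omega)
    (by omega)
  refine ⟨ofGraph h ξ n, increasing_ofGraph hξ (monotone_glue (monotone_envelope hI)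
    (monotone_envelope hIR) hFc hFc'), convexChain_ofGraph hξ hconv, ?_, ?_,
    pts_ofGraph_glue_subset hI hC hIR hCR hFc hFc' hRc hRc' hξ hξQ (hSξ c (by simp [S]))
      (hSξ c' (by simp [S])) hQξ fun j hj hjc => hSξ _ (Finset.mem_union_left _
        (Finset.mem_filter.2 ⟨Finset.mem_image_of_mem _ (Finset.mem_range.2 (by omega)), hjc⟩)),
    ?_⟩
  · change (ξ 0, h (ξ 0)) = Q.v 0
    rw [hh₀, h₀, envelope_vertex hI hC hk (Nat.zero_le _)]
  · change (ξ n, h (ξ n)) = Q.v Q.k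
    rw [hhn, hn, envelope_vertex hI hC hk le_rfl]
  · rw [length_eq_sum_eudist_envelope hI hC hk hξ h₀ hn hQξ]
    obtain ⟨m, hm, hmξ⟩ := hSξ ((c + c') / 2) (by simp [S])
    have hmid : ξ m ∈ Ioo c c' := by constructor <;> linarith
    exact sum_eudist_lt_of_le_of_slope_mono (n := n) hstep
      (fun i hi => hconv.slope_mono_adjacent (mem_univ _) (mem_univ _) (hstep i (by omega))
        (hstep (i + 1) hi))
      (fun i _ => le_glue (fun t ht => (hlt t ht).le) _) hh₀.symm hhn.symm
      ⟨m, hm, (hlt _ hmid).trans_eq (if_pos hmid).symm⟩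

end PolyChain

open PolyChain

theorem Crosses.exists_lens {Q R : PolyChain} {T : ℝ × ℝ} (hI : Q.Increasing) (hC : Q.ConvexChain) (hIR : R.Increasing)
    (hCR : R.ConvexChain) (hQT : Q.v Q.k = T) (hRT : R.v R.k = T) (h : Crosses Q R T) :
    0 < Q.k ∧ 0 < R.k ∧ ∃ c c', c < c' ∧ (Q.v 0).1 ≤ c ∧ (R.v 0).1 ≤ c ∧ c' ≤ T.1 ∧
      Q.envelope c = R.envelope c ∧ Q.envelope c' = R.envelope c' ∧
      ∀ t ∈ Ioo c c', Q.envelope t < R.envelope t := by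
  obtain ⟨C, ⟨hQC, hRC⟩, hCT, ε, hε, hbelow⟩ := h
  have hpos {P : PolyChain} (hP : C ∈ P.pts) : 0 < P.k :=
    Nat.pos_of_ne_zero fun h0 => by simp [pts, h0] at hP
  have hk := hpos hQC
  have hkR := hpos hRC
  have hFT : Q.envelope T.1 = T.2 := hQT ▸ envelope_vertex hI hC hk le_rfl
  have hGT : R.envelope T.1 = T.2 := hRT ▸ envelope_vertex hIR hCR hkR le_rfl
  rw [mem_pts_iff hI hC hk, hQT] at hQC
  rw [mem_pts_iff hIR hCR hkR, hRT] at hRC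
  obtain ⟨⟨hQ0, hCT'⟩, hFC⟩ := hQC
  obtain ⟨⟨hR0, -⟩, hGC⟩ := hRC
  have hCT1 : C.1 < T.1 := hCT'.lt_of_ne fun h1 => hCT (Prod.ext h1 (by rw [hFC, h1, hFT]))
  obtain ⟨c', ⟨hcc', hc'T⟩, hc', hlt⟩ := exists_first_eq_of_lt (continuous_envelope hk)
    (continuous_envelope hkR) hCT1 (hFT.trans hGT.symm) hε fun t ht htT =>
      hbelow (t, Q.envelope t) ((mem_pts_iff hI hC hk).2 ⟨⟨by linarith [ht.1], hQT ▸ htT⟩, rfl⟩)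
        (t, R.envelope t) ((mem_pts_iff hIR hCR hkR).2 ⟨⟨by linarith [ht.1], hRT ▸ htT⟩, rfl⟩)
        rfl ht.1 ht.2
  exact ⟨hk, hkR, C.1, c', hcc', hQ0, hR0, hc'T, hFC.symm.trans hGC, hc', hlt⟩

theorem stmt2_general (O : Finset ((ℝ × ℝ) × (ℝ × ℝ))) (Y Y' T : ℝ × ℝ)
    (Pstar P : PolyChain)
    (hPstar : CICP Y T O Pstar)
    (hmin : ∀ P', CICP Y T O P' → Pstar.length ≤ P'.length)
    (hP : CICP Y' T O P) :
    ¬ Crosses Pstar P T := by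
  intro hcross
  obtain ⟨hI, hC, hY, hT, hfree⟩ := hPstar
  obtain ⟨hIR, hCR, -, hTR, hfreeR⟩ := hP
  obtain ⟨hk, hkR, c, c', hcc', hc, hRc, hc'T, hFc, hFc', hlt⟩ :=
    hcross.exists_lens hI hC hIR hCR hT hTR
  obtain ⟨P', hI', hC', h₀, hend, hsub, hshort⟩ := exists_shortcut hI hC hk hIR hCR hkR hcc' hc
    (hT ▸ hc'T) hRc (hTR ▸ hc'T) hFc hFc' hlt
  have := hmin P' ⟨hI', hC', h₀.trans hY, hend.trans hT, fun o ho =>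
    (disjoint_union_left.2 ⟨hfree o ho, hfreeR o ho⟩).mono_left hsub⟩
  linarith

/-- A minimum-length CICP `P*(Y)` from `Y` to `T` never crosses any CICP from
another take-off point `Y'` to `T`. -/
theorem stmt2 (O : Finset ((ℝ × ℝ) × (ℝ × ℝ))) (Y Y' T : ℝ × ℝ)
    (hline : Y.2 = Y'.2) (hT : Y.2 < T.2)
    (Pstar P : PolyChain)
    (hPstar : CICP Y T O Pstar)
    (hmin : ∀ P', CICP Y T O P' → Pstar.length ≤ P'.length)
    (hP : CICP Y' T O P) :
    ¬ Crosses Pstar P T :=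
  stmt2_general O Y Y' T Pstar P hPstar hmin hP
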